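/- arXiv:1309.1070 — 3 statements merged into one kernel-verified Lean document; each statement's English description precedes it below -/
import Mathlib

section
/- Let (G_i, g_i)_{i ∈ ℤ/6} be an exact cyclic six-term sequence of finitely generated abelian groups such that G_3 = 0 and G_5 is a free abelian group. Then there exist exact cyclic six-term sequences (H_i, h_i)_{i ∈ ℤ/6} and (F_i, f_i)_{i ∈ ℤ/6} in which every H_i and every F_i is a finitely generated free abelian group, together with group homomorphisms λ_i : H_i → F_i and η_i : F_i → G_i satisfying f_i ∘ λ_i = λ_{i+1} ∘ h_i and g_i ∘ η_i = η_{i+1} ∘ f_i for all i, such that for every i ∈ ℤ/6 the sequence 0 → H_i → F_i → G_i → 0 is short exact, i.e. λ_i is injective, η_i is surjective, and im λ_i = ker η_i. (In other words, every such sequence admits a length-one projective resolution by exact cyclic six-term sequences of finitely generated free abelian groups.) -/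
/-!
Choose homomorphisms `πᵢ : ℤ^{rᵢ} → Gᵢ` with image `ker gᵢ`, and lifts `σᵢ : ℤ^{rᵢ₊₁} → Gᵢ`
with `gᵢ ∘ σᵢ = πᵢ₊₁` (possible since `ker gᵢ₊₁ = im gᵢ`). The split exact complex
`Fᵢ = ℤ^{rᵢ} × ℤ^{rᵢ₊₁}`, `fᵢ (a, b) = (b, 0)`, maps onto `G` by `ηᵢ (a, b) = πᵢ a + σᵢ b`.
Over the PID `ℤ` the kernels `Hᵢ = ker ηᵢ` are free of finite rank, and the long exact homology
sequence of `0 → H → F → G → 0`, made explicit as a diagram chase, shows that `H` is exact.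
-/

open Function

theorem AddMonoidHom.exists_comp_eq_of_range_le {P M N : Type*} [AddCommGroup P]
    [Module.Projective ℤ P] [AddCommGroup M] [AddCommGroup N] (g : M →+ N) (p : P →+ N)
    (hp : p.range ≤ g.range) : ∃ s : P →+ M, g.comp s = p := by
  obtain ⟨s, hs⟩ := Module.projective_lifting_property g.rangeRestrict.toIntLinearMap
    (p.codRestrict g.range fun x => hp ⟨x, rfl⟩).toIntLinearMap g.rangeRestrict_surjective
  exact ⟨s.toAddMonoidHom, AddMonoidHom.ext fun x => congrArg Subtype.val (LinearMap.congr_fun hs x)⟩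

theorem AddSubgroup.fg_of_addGroup_fg {G : Type*} [AddCommGroup G] (hG : AddGroup.FG G)
    (K : AddSubgroup G) : K.FG := by
  have := Module.Finite.iff_addGroup_fg.2 hG
  rw [← K.toIntSubmodule_toAddSubgroup, ← Submodule.fg_iff_addSubgroup_fg]
  exact IsNoetherian.noetherian _

theorem AddSubgroup.exists_injective_fin_int_range_eq {F : Type*} [AddCommGroup F]
    [Module.Free ℤ F] [Module.Finite ℤ F] (K : AddSubgroup F) :
    ∃ (n : ℕ) (j : (Fin n → ℤ) →+ F), Injective j ∧ j.range = K := by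
  obtain ⟨n, b⟩ := Submodule.basisOfPid (Module.Free.chooseBasis ℤ F) K.toIntSubmodule
  refine ⟨n, (K.toIntSubmodule.subtype ∘ₗ b.equivFun.symm.toLinearMap).toAddMonoidHom,
    Subtype.val_injective.comp b.equivFun.symm.injective, ?_⟩
  ext x
  constructor
  · rintro ⟨u, rfl⟩
    exact (b.equivFun.symm u).2
  · exact fun hx => ⟨b.equivFun ⟨x, hx⟩, by simp⟩

section CyclicSequences

variable {ι : Type*} [Add ι] [One ι]

def shiftMap (P : ι → Type*) [∀ i, AddCommGroup (P i)] (i : ι) :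
    P i × P (i + 1) →+ P (i + 1) × P (i + 1 + 1) :=
  (AddMonoidHom.inl _ _).comp (AddMonoidHom.snd _ _)

theorem range_shiftMap_eq_ker (P : ι → Type*) [∀ i, AddCommGroup (P i)] (i : ι) :
    (shiftMap P i).range = (shiftMap P (i + 1)).ker := by
  ext ⟨a, b⟩
  simp [shiftMap, eq_comm (a := (0 : P (i + 1 + 1)))]

section Cover

variable {G P : ι → Type*} [∀ i, AddCommGroup (G i)] [∀ i, AddCommGroup (P i)]
  {g : ∀ i, G i →+ G (i + 1)} {π : ∀ i, P i →+ G i} {σ : ∀ i, P (i + 1) →+ G i}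

theorem comp_coprod_eq_coprod_comp_shiftMap (hπ : ∀ i, (π i).range = (g i).ker)
    (hσ : ∀ i, (g i).comp (σ i) = π (i + 1)) (i : ι) :
    (g i).comp ((π i).coprod (σ i)) = ((π (i + 1)).coprod (σ (i + 1))).comp (shiftMap P i) := by
  ext ⟨a, b⟩
  have ha : g i (π i a) = 0 := (hπ i).le ⟨a, rfl⟩
  simp [shiftMap, ha, ← hσ i]

theorem coprod_surjective (hg : ∀ i, (g i).range = (g (i + 1)).ker)
    (hπ : ∀ i, (π i).range = (g i).ker) (hσ : ∀ i, (g i).comp (σ i) = π (i + 1)) (i : ι) :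
    Surjective ((π i).coprod (σ i)) := by
  intro x
  obtain ⟨b, hb⟩ : g i x ∈ (π (i + 1)).range := by
    rw [hπ, ← hg]
    exact ⟨x, rfl⟩
  obtain ⟨a, ha⟩ : x - σ i b ∈ (π i).range := by
    rw [hπ, AddMonoidHom.mem_ker, map_sub, ← AddMonoidHom.comp_apply, hσ, hb, sub_self]
  exact ⟨(a, b), by simp [ha]⟩

end Cover

variable {F G : ι → Type*} [∀ i, AddCommGroup (F i)] [∀ i, AddCommGroup (G i)]
  {g : ∀ i, G i →+ G (i + 1)}

theorem exists_fin_int_cover_of_free_cover [∀ i, Module.Free ℤ (F i)] [∀ i, Module.Finite ℤ (F i)]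
    (f : ∀ i, F i →+ F (i + 1)) (η : ∀ i, F i →+ G i)
    (hf : ∀ i, (f i).range = (f (i + 1)).ker) (hη : ∀ i, Surjective (η i))
    (hcomm : ∀ i, (g i).comp (η i) = (η (i + 1)).comp (f i)) :
    ∃ (m : ι → ℕ) (f' : ∀ i, (Fin (m i) → ℤ) →+ (Fin (m (i + 1)) → ℤ))
      (η' : ∀ i, (Fin (m i) → ℤ) →+ G i),
      (∀ i, (f' i).range = (f' (i + 1)).ker) ∧ (∀ i, Surjective (η' i)) ∧
      (∀ i, (g i).comp (η' i) = (η' (i + 1)).comp (f' i)) := by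
  let e i : F i ≃+ (Fin (Module.finrank ℤ (F i)) → ℤ) :=
    (Module.finBasis ℤ (F i)).equivFun.toAddEquiv
  refine ⟨_, fun i => (e (i + 1)).toAddMonoidHom.comp ((f i).comp (e i).symm.toAddMonoidHom),
    fun i => (η i).comp (e i).symm.toAddMonoidHom, fun i => ?_, fun i => ?_, fun i => ?_⟩
  · ext x
    rw [AddMonoidHom.mem_range, (e i).surjective.exists, AddMonoidHom.mem_ker]
    simp only [AddMonoidHom.coe_comp, AddEquiv.coe_toAddMonoidHom, comp_apply,
      AddEquiv.symm_apply_apply, ← AddEquiv.eq_symm_apply, map_eq_zero_iff _ (e _).injective]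
    exact SetLike.ext_iff.1 (hf i) _
  · exact (hη i).comp (e i).symm.surjective
  · refine AddMonoidHom.ext fun x => ?_
    simpa using DFunLike.congr_fun (hcomm i) ((e i).symm x)

theorem exists_fin_int_cover (hg : ∀ i, (g i).range = (g (i + 1)).ker)
    (hfg : ∀ i, AddGroup.FG (G i)) :
    ∃ (m : ι → ℕ) (f : ∀ i, (Fin (m i) → ℤ) →+ (Fin (m (i + 1)) → ℤ))
      (η : ∀ i, (Fin (m i) → ℤ) →+ G i),
      (∀ i, (f i).range = (f (i + 1)).ker) ∧ (∀ i, Surjective (η i)) ∧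
      (∀ i, (g i).comp (η i) = (η (i + 1)).comp (f i)) := by
  choose r π hπ using fun i =>
    AddSubgroup.fg_iff_exists_fin_addMonoidHom.1 ((g i).ker.fg_of_addGroup_fg (hfg i))
  choose σ hσ using fun i =>
    (g i).exists_comp_eq_of_range_le (π (i + 1)) ((hπ (i + 1)).trans (hg i).symm).le
  exact exists_fin_int_cover_of_free_cover (shiftMap _) (fun i => (π i).coprod (σ i))
    (range_shiftMap_eq_ker _) (coprod_surjective hg hπ hσ)
    (comp_coprod_eq_coprod_comp_shiftMap hπ hσ)

theorem exists_fin_int_kernel [∀ i, Module.Free ℤ (F i)] [∀ i, Module.Finite ℤ (F i)]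
    (f : ∀ i, F i →+ F (i + 1)) (η : ∀ i, F i →+ G i)
    (hcomm : ∀ i, (g i).comp (η i) = (η (i + 1)).comp (f i)) :
    ∃ (n : ι → ℕ) (h : ∀ i, (Fin (n i) → ℤ) →+ (Fin (n (i + 1)) → ℤ))
      (lam : ∀ i, (Fin (n i) → ℤ) →+ F i),
      (∀ i, (f i).comp (lam i) = (lam (i + 1)).comp (h i)) ∧ (∀ i, Injective (lam i)) ∧
      (∀ i, (lam i).range = (η i).ker) := by
  choose n lam hinj hrange using fun i => (η i).ker.exists_injective_fin_int_range_eq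
  have hmaps : ∀ i, ((f i).comp (lam i)).range ≤ (lam (i + 1)).range := by
    rintro i _ ⟨u, rfl⟩
    have hu : η i (lam i u) = 0 := (hrange i).le ⟨u, rfl⟩
    rw [hrange, AddMonoidHom.mem_ker, AddMonoidHom.comp_apply, ← AddMonoidHom.comp_apply,
      ← hcomm, AddMonoidHom.comp_apply, hu, map_zero]
  choose h hh using fun i => (lam (i + 1)).exists_comp_eq_of_range_le _ (hmaps i)
  exact ⟨n, h, lam, fun i => (hh i).symm, hinj, hrange⟩

end CyclicSequences

theorem range_eq_ker_of_shortExact {ι : Type*} [AddGroup ι] [One ι] {H F G : ι → Type*}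
    [∀ i, AddCommGroup (H i)] [∀ i, AddCommGroup (F i)] [∀ i, AddCommGroup (G i)]
    {h : ∀ i, H i →+ H (i + 1)} {f : ∀ i, F i →+ F (i + 1)} {g : ∀ i, G i →+ G (i + 1)}
    {lam : ∀ i, H i →+ F i} {η : ∀ i, F i →+ G i}
    (hf : ∀ i, (f i).range = (f (i + 1)).ker) (hg : ∀ i, (g i).range = (g (i + 1)).ker)
    (hlam : ∀ i, (f i).comp (lam i) = (lam (i + 1)).comp (h i))
    (hη : ∀ i, (g i).comp (η i) = (η (i + 1)).comp (f i))
    (hinj : ∀ i, Injective (lam i)) (hsurj : ∀ i, Surjective (η i))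
    (hrange : ∀ i, (lam i).range = (η i).ker) (i : ι) :
    (h i).range = (h (i + 1)).ker := by
  have hlam' i x : f i (lam i x) = lam (i + 1) (h i x) := DFunLike.congr_fun (hlam i) x
  have hη' i x : g i (η i x) = η (i + 1) (f i x) := DFunLike.congr_fun (hη i) x
  obtain ⟨j, rfl⟩ : ∃ j, j + 1 = i := ⟨i - 1, sub_add_cancel i 1⟩
  ext x
  constructor
  · rintro ⟨y, rfl⟩
    apply hinj
    rw [← hlam', ← hlam', map_zero]
    exact (hf _).le ⟨_, rfl⟩
  · intro hx
    obtain ⟨y, hy⟩ : lam (j + 1 + 1) x ∈ (f (j + 1)).range := by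
      rw [hf, AddMonoidHom.mem_ker, hlam', AddMonoidHom.mem_ker.1 hx, map_zero]
    obtain ⟨z, hz⟩ : η (j + 1) y ∈ (g j).range := by
      rw [hg, AddMonoidHom.mem_ker, hη', hy]
      exact (hrange _).le ⟨x, rfl⟩
    obtain ⟨w, rfl⟩ := hsurj j z
    obtain ⟨u, hu⟩ : y - f j w ∈ (lam (j + 1)).range := by
      rw [hrange, AddMonoidHom.mem_ker, map_sub, ← hη', hz, sub_self]
    refine ⟨u, hinj _ ?_⟩
    rw [← hlam', hu, map_sub, hy, (hf _).le ⟨w, rfl⟩, sub_zero]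

theorem six_term_projective_resolution_general
    {G : ZMod 6 → Type*} [∀ i, AddCommGroup (G i)]
    (g : ∀ i, G i →+ G (i + 1))
    (hexact : ∀ i, (g i).range = (g (i + 1)).ker)
    (hfg : ∀ i, AddGroup.FG (G i)) :
    ∃ (n m : ZMod 6 → ℕ)
      (h : ∀ i, (Fin (n i) → ℤ) →+ (Fin (n (i + 1)) → ℤ))
      (f : ∀ i, (Fin (m i) → ℤ) →+ (Fin (m (i + 1)) → ℤ))
      (lam : ∀ i, (Fin (n i) → ℤ) →+ (Fin (m i) → ℤ))
      (η : ∀ i, (Fin (m i) → ℤ) →+ G i),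
      (∀ i, (h i).range = (h (i + 1)).ker) ∧
      (∀ i, (f i).range = (f (i + 1)).ker) ∧
      (∀ i, (f i).comp (lam i) = (lam (i + 1)).comp (h i)) ∧
      (∀ i, (g i).comp (η i) = (η (i + 1)).comp (f i)) ∧
      (∀ i, Function.Injective (lam i)) ∧
      (∀ i, Function.Surjective (η i)) ∧
      (∀ i, (lam i).range = (η i).ker) := by
  obtain ⟨m, f, η, hf, hsurj, hη⟩ := exists_fin_int_cover hexact hfg
  obtain ⟨n, h, lam, hlam, hinj, hrange⟩ := exists_fin_int_kernel f η hη
  exact ⟨n, m, h, f, lam, η,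
    range_eq_ker_of_shortExact hf hexact hlam hη hinj hsurj hrange,
    hf, hlam, hη, hinj, hsurj, hrange⟩

/-- Every exact cyclic six-term sequence `(G_i, g_i)` of finitely generated abelian
groups with `G_3 = 0` and `G_5` free admits a length-one projective resolution by
exact cyclic six-term sequences of finitely generated free abelian groups
(`H_i = ℤ^{n i}`, `F_i = ℤ^{m i}`). -/
theorem six_term_projective_resolution
    {G : ZMod 6 → Type*} [∀ i, AddCommGroup (G i)]
    (g : ∀ i, G i →+ G (i + 1))
    (hexact : ∀ i, (g i).range = (g (i + 1)).ker)
    (hfg : ∀ i, AddGroup.FG (G i))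
    (hG3 : ∀ x : G 3, x = 0)
    (hfree : Module.Free ℤ (G 5)) :
    ∃ (n m : ZMod 6 → ℕ)
      (h : ∀ i, (Fin (n i) → ℤ) →+ (Fin (n (i + 1)) → ℤ))
      (f : ∀ i, (Fin (m i) → ℤ) →+ (Fin (m (i + 1)) → ℤ))
      (lam : ∀ i, (Fin (n i) → ℤ) →+ (Fin (m i) → ℤ))
      (η : ∀ i, (Fin (m i) → ℤ) →+ G i),
      (∀ i, (h i).range = (h (i + 1)).ker) ∧
      (∀ i, (f i).range = (f (i + 1)).ker) ∧
      (∀ i, (f i).comp (lam i) = (lam (i + 1)).comp (h i)) ∧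
      (∀ i, (g i).comp (η i) = (η (i + 1)).comp (f i)) ∧
      (∀ i, Function.Injective (lam i)) ∧
      (∀ i, Function.Surjective (η i)) ∧
      (∀ i, (lam i).range = (η i).ker) :=
  six_term_projective_resolution_general g hexact hfg
end

section
/- Let A be a C*-algebra and let p : [0,1] → A be a norm-continuous map such that p(t) is a projection (p(t)* = p(t) and p(t)² = p(t)) for every t ∈ [0,1]. Then p(0) and p(1) are Murray–von Neumann equivalent, i.e. there exists v ∈ A with v*v = p(0) and vv* = p(1). -/
/-!
Projections at distance less than one are unitarily equivalent: for `‖p - q‖ < 1` the element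
`z = q p + (1 - q)(1 - p)` satisfies `z p = q z` and `z⋆ z = z z⋆ = 1 - (p - q)²`, which is
invertible, so the unitary part `u = z (z⋆ z)^(-1/2)` of `z` conjugates `p` to `q`, and `v = u p`
implements the Murray–von Neumann equivalence. In a non-unital algebra this is done in the
unitization, where `u p` still lies in the algebra. Murray–von Neumann equivalence of projections
is transitive, so being locally constant along the path it is constant on the connected
interval.
-/

open CFC Unitization

section Intertwiner

variable {R : Type*} [Ring R]

def intertwiner (p q : R) : R := q * p + (1 - q) * (1 - p)

variable {p q : R}

lemma intertwiner_mul (hp : IsIdempotentElem p) (hq : IsIdempotentElem q) :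
    intertwiner p q * p = q * intertwiner p q := by
  simp only [intertwiner, mul_add, add_mul, mul_sub, sub_mul, mul_one, one_mul, mul_assoc, hp.eq,
    ← mul_assoc q q, hq.eq]
  abel

lemma intertwiner_mul_intertwiner (hp : IsIdempotentElem p) (hq : IsIdempotentElem q) :
    intertwiner q p * intertwiner p q = 1 - (p - q) ^ 2 := by
  have hq' : ∀ x, q * (q * x) = q * x := fun x => by rw [← mul_assoc, hq.eq]
  simp only [intertwiner, sq, mul_add, add_mul, mul_sub, sub_mul, mul_one, one_mul, mul_assoc,
    hp.eq, hq.eq, hq']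
  abel

lemma star_intertwiner [StarRing R] (hp : IsSelfAdjoint p) (hq : IsSelfAdjoint q) :
    star (intertwiner p q) = intertwiner q p := by
  simp [intertwiner, hp.star_eq, hq.star_eq]

end Intertwiner

section Unital

variable {B : Type*} [CStarAlgebra B]

section Order

variable [PartialOrder B] [StarOrderedRing B]

lemma IsStarNormal.mul_rpow_star_mul_self_neg_half_mem_unitary {z : B} (hz : IsStarNormal z)
    (h : IsUnit (star z * z)) : z * (star z * z) ^ (-(1 / 2) : ℝ) ∈ unitary B := by
  set a := star z * z
  have ha : IsStrictlyPositive a := h.isStrictlyPositive (star_mul_self_nonneg z)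
  set s := a ^ (-(1 / 2) : ℝ)
  have hs : star s = s := rpow_nonneg.isSelfAdjoint.star_eq
  have hsas : s * a * s = 1 := by
    rw [← rpow_one a, ← rpow_add h, ← rpow_add h]
    norm_num [rpow_zero a]
  have hza : Commute z a := by
    rw [Commute, SemiconjBy, ← mul_assoc, ← hz.star_comm_self.eq, mul_assoc]
  have hzs : Commute z s := ((hza.symm).cfc_nnreal _).symm
  have hsa : Commute s a := (Commute.refl a).cfc_nnreal _
  rw [Unitary.mem_iff, star_mul, hs]
  constructor
  · calc s * star z * (z * s) = s * a * s := by simp only [a, mul_assoc]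
      _ = 1 := hsas
  · calc z * s * (s * star z) = s * s * (z * star z) := by
          rw [← mul_assoc (s * s), ← (hzs.mul_right hzs).eq]; simp only [mul_assoc]
      _ = s * (s * a) := by rw [← hz.star_comm_self.eq, mul_assoc]
      _ = s * (a * s) := by rw [hsa.eq]
      _ = 1 := by rw [← mul_assoc, hsas]

end Order

lemma exists_unitary_conj_eq_of_norm_sub_lt_one {p q : B} (hp : IsStarProjection p)
    (hq : IsStarProjection q) (hpq : ‖p - q‖ < 1) : ∃ u ∈ unitary B, u * p * star u = q := by
  let _ := CStarAlgebra.spectralOrder B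
  have _ := CStarAlgebra.spectralOrderedRing B
  set z := intertwiner p q
  have hstar : star z = intertwiner q p := star_intertwiner hp.isSelfAdjoint hq.isSelfAdjoint
  have hzz : star z * z = 1 - (p - q) ^ 2 := by
    rw [hstar, intertwiner_mul_intertwiner hp.isIdempotentElem hq.isIdempotentElem]
  have hz : IsStarNormal z := by
    refine ⟨?_⟩
    rw [Commute, SemiconjBy, hzz, hstar, intertwiner_mul_intertwiner hq.isIdempotentElem
      hp.isIdempotentElem, ← neg_sub p q, neg_sq]
  have hunit : IsUnit (star z * z) := by
    rw [hzz]
    refine (Units.oneSub _ ?_).isUnit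
    calc ‖(p - q) ^ 2‖ ≤ ‖p - q‖ ^ 2 := norm_pow_le' _ two_pos
      _ < 1 := pow_lt_one₀ (norm_nonneg _) hpq two_ne_zero
  have hu := hz.mul_rpow_star_mul_self_neg_half_mem_unitary hunit
  refine ⟨_, hu, ?_⟩
  set s := (star z * z) ^ (-(1 / 2) : ℝ)
  have hzp : z * p = q * z := intertwiner_mul hp.isIdempotentElem hq.isIdempotentElem
  have hpz : p * star z = star z * q := by
    simpa [hp.isSelfAdjoint.star_eq, hq.isSelfAdjoint.star_eq] using congrArg star hzp
  have hpa : Commute p (star z * z) := by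
    rw [Commute, SemiconjBy, ← mul_assoc, hpz, mul_assoc, ← hzp, mul_assoc]
  have hps : Commute s p := hpa.symm.cfc_nnreal _
  calc z * s * p * star (z * s) = q * (z * s * star (z * s)) := by
        rw [mul_assoc z, hps.eq, ← mul_assoc z p s, hzp]; simp only [mul_assoc]
    _ = q := by rw [Unitary.mul_star_self_of_mem hu, mul_one]

end Unital

def MurrayVonNeumannEquiv {A : Type*} [Mul A] [Star A] (p q : A) : Prop :=
  ∃ v : A, star v * v = p ∧ v * star v = q

namespace MurrayVonNeumannEquiv

section Semigroup

variable {A : Type*} [Semigroup A] [StarMul A] {p q r : A}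

lemma symm (h : MurrayVonNeumannEquiv p q) : MurrayVonNeumannEquiv q p := by
  obtain ⟨v, hv₁, hv₂⟩ := h
  exact ⟨star v, by rwa [star_star], by rwa [star_star]⟩

lemma trans (hpq : MurrayVonNeumannEquiv p q) (hqr : MurrayVonNeumannEquiv q r)
    (hp : IsIdempotentElem p) (hr : IsIdempotentElem r) : MurrayVonNeumannEquiv p r := by
  obtain ⟨v, hv₁, hv₂⟩ := hpq
  obtain ⟨w, hw₁, hw₂⟩ := hqr
  refine ⟨w * v, ?_, ?_⟩
  · calc star (w * v) * (w * v) = star v * (star w * w) * v := by simp only [star_mul, mul_assoc]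
      _ = (star v * v) * (star v * v) := by rw [hw₁, ← hv₂]; simp only [mul_assoc]
      _ = p := by rw [hv₁, hp.eq]
  · calc w * v * star (w * v) = w * (v * star v) * star w := by simp only [star_mul, mul_assoc]
      _ = (w * star w) * (w * star w) := by rw [hv₂, ← hw₁]; simp only [mul_assoc]
      _ = r := by rw [hw₂, hr.eq]

end Semigroup

variable {A : Type*} [NonUnitalCStarAlgebra A]

lemma of_norm_sub_lt_one {p q : A} (hp : IsStarProjection p) (hq : IsStarProjection q)
    (hpq : ‖p - q‖ < 1) : MurrayVonNeumannEquiv p q := by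
  have hp' : IsStarProjection (p : Unitization ℂ A) := hp.map (inrNonUnitalStarAlgHom ℂ A)
  obtain ⟨u, hu, huq⟩ := exists_unitary_conj_eq_of_norm_sub_lt_one hp'
    (hq.map (inrNonUnitalStarAlgHom ℂ A)) (by simpa [← inr_sub, Unitization.norm_inr] using hpq)
  set v := u * (p : Unitization ℂ A)
  have hv : ((v.snd : A) : Unitization ℂ A) = v := Unitization.ext (by simp [v]) rfl
  refine ⟨v.snd, inr_injective (R := ℂ) ?_, inr_injective (R := ℂ) ?_⟩
  · rw [inr_mul, inr_star, hv, star_mul, mul_assoc, ← mul_assoc (star u),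
      Unitary.star_mul_self_of_mem hu, one_mul, hp'.isSelfAdjoint.star_eq, hp'.isIdempotentElem.eq]
  · rw [inr_mul, inr_star, hv, star_mul, ← mul_assoc, mul_assoc u, hp'.isSelfAdjoint.star_eq,
      hp'.isIdempotentElem.eq]
    exact huq

end MurrayVonNeumannEquiv

theorem IsPreconnected.murrayVonNeumannEquiv {A X : Type*} [NonUnitalCStarAlgebra A]
    [TopologicalSpace X] {s : Set X} (hs : IsPreconnected s) {p : X → A}
    (hcont : ContinuousOn p s) (hproj : ∀ x ∈ s, IsStarProjection (p x)) {x y : X} (hx : x ∈ s)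
    (hy : y ∈ s) : MurrayVonNeumannEquiv (p x) (p y) := by
  refine hs.induction₂ (fun x y ↦ MurrayVonNeumannEquiv (p x) (p y)) (fun x hx ↦ ?_)
    (fun x _ z hx _ hz hxy hyz ↦ hxy.trans hyz (hproj x hx).isIdempotentElem
      (hproj z hz).isIdempotentElem)
    (fun _ _ _ _ h ↦ h.symm) hx hy
  filter_upwards [hcont x hx (Metric.ball_mem_nhds (p x) one_pos), self_mem_nhdsWithin]
    with y hxy hy
  exact .of_norm_sub_lt_one (hproj x hx) (hproj y hy) (by rwa [← dist_eq_norm, dist_comm])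

/-- The endpoints of a norm-continuous path of projections in a C*-algebra are
Murray–von Neumann equivalent. -/
theorem projection_path_endpoints_mvn_equivalent
    {A : Type*} [NonUnitalNormedRing A] [StarRing A] [CStarRing A] [CompleteSpace A]
    [NormedSpace ℂ A] [IsScalarTower ℂ A A] [SMulCommClass ℂ A A] [StarModule ℂ A]
    (p : ℝ → A) (hcont : ContinuousOn p (Set.Icc 0 1))
    (hproj : ∀ t ∈ Set.Icc (0 : ℝ) 1, star (p t) = p t ∧ p t * p t = p t) :
    ∃ v : A, star v * v = p 0 ∧ v * star v = p 1 := by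
  let _ : NonUnitalCStarAlgebra A := {}
  exact isPreconnected_Icc.murrayVonNeumannEquiv hcont
    (fun t ht ↦ ⟨(hproj t ht).2, (hproj t ht).1⟩) (Set.left_mem_Icc.2 zero_le_one)
    (Set.right_mem_Icc.2 zero_le_one)
end

section
/- Let (G_i, g_i)_{i ∈ ℤ/6} be an exact cyclic six-term sequence of finitely generated abelian groups such that the map g_2 : G_2 → G_3 is zero and G_5 is torsion-free. Then (G_i, g_i) is isomorphic, as a cyclic six-term sequence, to a direct sum (G'_i ⊕ G''_i, g'_i ⊕ g''_i) of two exact cyclic six-term sequences, where G'_3 = 0 and G'_4 and G'_5 are finitely generated free abelian groups, and where G''_i = 0 for all i ∉ {3,4} while g''_3 : G''_3 → G''_4 is an isomorphism. (An isomorphism of cyclic six-term sequences is a family of group isomorphisms φ_i : G_i → G'_i ⊕ G''_i with φ_{i+1} ∘ g_i = (g'_i ⊕ g''_i) ∘ φ_i for all i ∈ ℤ/6.) -/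
/-!
Exactness at `G 3` together with `g 2 = 0` makes `g 3` injective, so `g 3 : G 3 → ker g 4` is
an isomorphism; this is the second summand. The image of `g 4` is a subgroup of the finitely
generated torsion-free group `G 5`, hence free, so `ker g 4` has a complement `C` in `G 4`, and
`C ≅ G 4 ⧸ ker g 4 ≅ im g 4` is free. The first summand is `G 0, G 1, G 2, 0, C, G 5`; it is
exact at `G 5` because `g 4` maps `C` onto `im g 4 = ker g 5`.
-/

open Function

theorem LinearMap.exists_isCompl_ker {R M N : Type*} [Ring R] [AddCommGroup M] [Module R M]
    [AddCommGroup N] [Module R N] (f : M →ₗ[R] N) [Module.Projective R (range f)] :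
    ∃ C : Submodule R M, IsCompl C (ker f) := by
  obtain ⟨s, hs⟩ := f.rangeRestrict.exists_rightInverse_of_surjective f.range_rangeRestrict
  have hproj : IsIdempotentElem (s ∘ₗ f.rangeRestrict) := by
    change s ∘ₗ (f.rangeRestrict ∘ₗ s) ∘ₗ f.rangeRestrict = s ∘ₗ f.rangeRestrict
    rw [hs, id_comp]
  have hcompl := IsIdempotentElem.isCompl hproj
  rw [range_comp_of_range_eq_top _ f.range_rangeRestrict,
    ker_comp_of_ker_eq_bot _ (ker_eq_bot_of_inverse hs), ker_rangeRestrict] at hcompl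
  exact ⟨_, hcompl⟩

theorem AddSubgroup.fg_and_free_of_isAddTorsionFree {N : Type*} [AddCommGroup N]
    [IsAddTorsionFree N] [Module.Finite ℤ N] (H : AddSubgroup N) :
    AddGroup.FG H ∧ Module.Free ℤ H :=
  ⟨Module.Finite.iff_addGroup_fg.1 (inferInstanceAs (Module.Finite ℤ H.toIntSubmodule)),
    inferInstanceAs (Module.Free ℤ H.toIntSubmodule)⟩

theorem AddMonoidHom.exists_isCompl_ker_fg_free {M N : Type*} [AddCommGroup M] [AddCommGroup N]
    [IsAddTorsionFree N] [Module.Finite ℤ N] (f : M →+ N) :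
    ∃ C : AddSubgroup M, IsCompl C f.ker ∧ AddGroup.FG C ∧ Module.Free ℤ C := by
  obtain ⟨_, _⟩ := f.range.fg_and_free_of_isAddTorsionFree
  obtain ⟨C, hC⟩ := f.toIntLinearMap.exists_isCompl_ker
  have e : C ≃ₗ[ℤ] f.range :=
    (Submodule.quotientEquivOfIsCompl _ _ hC.symm).symm ≪≫ₗ f.toIntLinearMap.quotKerEquivRange
  refine ⟨C.toAddSubgroup, ?_, ?_, Module.Free.of_equiv e.symm⟩
  · rwa [AddSubgroup.toIntSubmodule.isCompl_iff, Submodule.toAddSubgroup_toIntSubmodule]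
  · exact AddGroup.fg_of_surjective (f := e.symm.toAddMonoidHom) e.symm.surjective

theorem isAddTorsionFree_of_nsmul_eq_zero {M : Type*} [AddCommGroup M]
    (h : ∀ (x : M) (c : ℕ), c • x = 0 → c = 0 ∨ x = 0) : IsAddTorsionFree M where
  nsmul_right_injective n hn a b hab :=
    sub_eq_zero.1 <| (h _ n <| by rw [nsmul_sub, sub_eq_zero]; exact hab).resolve_left hn

theorem ZMod.six_cases (i : ZMod 6) : i = 0 ∨ i = 1 ∨ i = 2 ∨ i = 3 ∨ i = 4 ∨ i = 5 := by
  decide +revert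

namespace SixTerm

variable {G : ZMod 6 → Type*} [∀ i, AddCommGroup (G i)]

def freeSummand (C : AddSubgroup (G 4)) : ∀ i, AddSubgroup (G i) :=
  update (update (fun _ => ⊤) 3 ⊥) 4 C

def isoSummand (g : ∀ i, G i →+ G (i + 1)) : ∀ i, AddSubgroup (G i) :=
  update (update (fun _ => ⊥) 3 ⊤) 4 (g 4).ker

variable (g : ∀ i, G i →+ G (i + 1)) {C : AddSubgroup (G 4)}

theorem isoSummand_of_ne {i : ZMod 6} (h3 : i ≠ 3) (h4 : i ≠ 4) : isoSummand g i = ⊥ := by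
  simp [isoSummand, update_of_ne, h3, h4]

theorem isCompl_freeSummand_isoSummand (hC : IsCompl C (g 4).ker) (i : ZMod 6) :
    IsCompl (freeSummand C i) (isoSummand g i) := by
  rcases i.six_cases with rfl | rfl | rfl | rfl | rfl | rfl <;>
    simp +decide [freeSummand, isoSummand, update, hC, isCompl_top_bot, isCompl_bot_top]

theorem map_freeSummand_le (hg2 : g 2 = 0) (i : ZMod 6) :
    (freeSummand C i).map (g i) ≤ freeSummand C (i + 1) := by
  rcases i.six_cases with rfl | rfl | rfl | rfl | rfl | rfl <;>
    simp +decide [freeSummand, update, hg2]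

theorem map_isoSummand_le (hexact : ∀ i, Exact (g i) (g (i + 1))) (i : ZMod 6) :
    (isoSummand g i).map (g i) ≤ isoSummand g (i + 1) := by
  rcases i.six_cases with rfl | rfl | rfl | rfl | rfl | rfl <;>
    simp +decide [isoSummand, update, ← AddMonoidHom.range_eq_map]
  exact (hexact 3).addMonoidHom_ker_eq.ge

theorem exact_freeSummand (hexact : ∀ i, Exact (g i) (g (i + 1))) (hC : IsCompl C (g 4).ker)
    (i : ZMod 6) :
    ∀ y ∈ freeSummand C (i + 1), (g (i + 1) y = 0 ↔ ∃ x ∈ freeSummand C i, g i x = y) := by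
  have hrange : C.map (g 4) = (g 4).range := AddSubgroup.map_eq_range_iff.2 hC.codisjoint
  rcases i.six_cases with rfl | rfl | rfl | rfl | rfl | rfl <;>
    simp +decide [freeSummand, update]
  · exact fun y => hexact 0 y
  · exact fun y => hexact 1 y
  · exact ⟨0, map_zero _⟩
  · exact fun y hy => ⟨fun h => (AddSubgroup.disjoint_def.1 hC.disjoint hy h).symm,
      fun h => h ▸ map_zero _⟩
  · exact fun y => (hexact 4 y).trans (by rw [← AddMonoidHom.coe_range, ← hrange]; rfl)
  · exact fun y => hexact 5 y

theorem exact_isoSummand (hexact : ∀ i, Exact (g i) (g (i + 1))) (hg3 : Injective (g 3))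
    (i : ZMod 6) :
    ∀ y ∈ isoSummand g (i + 1), (g (i + 1) y = 0 ↔ ∃ x ∈ isoSummand g i, g i x = y) := by
  rcases i.six_cases with rfl | rfl | rfl | rfl | rfl | rfl <;>
    simp +decide [isoSummand, update]
  -- only the cases `i = 2, 3, 4` remain
  · exact fun y => (map_eq_zero_iff _ hg3).trans eq_comm
  · exact fun y _ => hexact 3 y
  · exact ⟨0, map_zero _⟩

end SixTerm

/-- An exact cyclic six-term sequence `(G_i, g_i)` of finitely generated abelian
groups with `g_2 = 0` and `G_5` torsion-free decomposes as a direct sum of two exact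
cyclic six-term sequences: internally, there are subgroups `A_i` and `B_i` of `G_i`,
complementary in each `G_i` and preserved by the maps `g_i`, such that both restricted
sequences are exact, `A_3 = 0`, `A_4` and `A_5` are finitely generated free abelian
groups, `B_i = 0` for `i ∉ {3,4}`, and `g_3` restricts to an isomorphism `B_3 → B_4`. -/
theorem six_term_direct_sum_decomposition
    {G : ZMod 6 → Type*} [∀ i, AddCommGroup (G i)]
    (g : ∀ i, G i →+ G (i + 1))
    (hexact : ∀ i, (g i).range = (g (i + 1)).ker)
    (hfg : ∀ i, AddGroup.FG (G i))
    (hg2 : g 2 = 0)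
    (htf : ∀ (x : G 5) (c : ℕ), c • x = 0 → c = 0 ∨ x = 0) :
    ∃ A B : ∀ i, AddSubgroup (G i),
      (∀ i, IsCompl (A i) (B i)) ∧
      (∀ i, (A i).map (g i) ≤ A (i + 1)) ∧
      (∀ i, (B i).map (g i) ≤ B (i + 1)) ∧
      (∀ i, ∀ y ∈ A (i + 1), (g (i + 1) y = 0 ↔ ∃ x ∈ A i, g i x = y)) ∧
      (∀ i, ∀ y ∈ B (i + 1), (g (i + 1) y = 0 ↔ ∃ x ∈ B i, g i x = y)) ∧
      A 3 = ⊥ ∧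
      AddGroup.FG (A 4) ∧ Module.Free ℤ (A 4) ∧
      AddGroup.FG (A 5) ∧ Module.Free ℤ (A 5) ∧
      (∀ i, i ≠ 3 → i ≠ 4 → B i = ⊥) ∧
      (∀ x ∈ B 3, g 3 x = 0 → x = 0) ∧
      (∀ y ∈ B (3 + 1), ∃ x ∈ B 3, g 3 x = y) := by
  have hexact' : ∀ i, Exact (g i) (g (i + 1)) := fun i => AddMonoidHom.exact_iff.2 (hexact i).symm
  have : IsAddTorsionFree (G 5) := isAddTorsionFree_of_nsmul_eq_zero htf
  have : Module.Finite ℤ (G 5) := Module.Finite.iff_addGroup_fg.2 (hfg 5)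
  have hg3 : Injective (g 3) := (injective_iff_map_eq_zero _).2 fun x hx => by
    obtain ⟨y, rfl⟩ := (hexact' 2 x).1 hx
    rw [hg2, AddMonoidHom.zero_apply]
  obtain ⟨C, hC, hCfg, hCfree⟩ := AddMonoidHom.exists_isCompl_ker_fg_free (N := G 5) (g 4)
  obtain ⟨hfg5, hfree5⟩ := (⊤ : AddSubgroup (G 5)).fg_and_free_of_isAddTorsionFree
  open SixTerm in
  exact ⟨freeSummand C, isoSummand g, isCompl_freeSummand_isoSummand g hC,
    map_freeSummand_le g hg2, map_isoSummand_le g hexact', exact_freeSummand g hexact' hC,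
    exact_isoSummand g hexact' hg3, rfl, hCfg, hCfree, hfg5, hfree5,
    fun _ => isoSummand_of_ne g, fun x _ hx => (map_eq_zero_iff _ hg3).1 hx,
    fun y hy => ((hexact' 3 y).1 hy).imp fun _ hx => ⟨trivial, hx⟩⟩
end
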